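/- arXiv:math/0703690 — 2 statements merged into one kernel-verified Lean document; each statement's English description precedes it below -/
import Mathlib

section
/- Let n, N ≥ 1 be integers. For every ℝ-basis (Y_1, …, Y_{N(N−1)/2}) of the real Lie algebra so(N) of antisymmetric real N×N matrices that is orthonormal with respect to the scalar product ⟨X,Y⟩ = −Tr(XY), the following identity of ℂ-linear endomorphisms of (ℂ^N)^{⊗n} holds: (∑_{τ ∈ T_n} P_τ) + ∑_a D(Y_a) ∘ D(Y_a) = −((N−1)n/2) · Id + ∑_{1 ≤ k < l ≤ n} C_{kl}. -/
/-!
Expanding the skew matrix `Eᵢⱼ - Eⱼᵢ` in the orthonormal basis `(Yₐ)` gives the completeness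
relation `2 ∑ₐ (Yₐ)ᵢⱼ Yₐ = Eᵢⱼ - Eⱼᵢ`, i.e. `∑ₐ Yₐ ⊗ Yₐ = ½ ∑ᵢⱼ (Eᵢⱼ ⊗ Eᵢⱼ - Eᵢⱼ ⊗ Eⱼᵢ)`,
which can be fed into any bilinear expression in `Yₐ`. Now
`D(Yₐ)² = ∑ₖ (Yₐ²)ₖ + 2 ∑_{k<l} (Yₐ)ₖ (Yₐ)ₗ`. For the matrix product the relation gives
`∑ₐ Yₐ² = -(N-1)/2 · 1`, whence the scalar term. For `(X, X') ↦ Xₖ X'ₗ` it gives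
`2 ∑ₐ (Yₐ)ₖ (Yₐ)ₗ = C_{kl} - P_{(k l)}`, because `∑ᵢⱼ (Eᵢⱼ)ₖ (Eⱼᵢ)ₗ` is the flip of the
factors `k` and `l` while `∑ᵢⱼ (Eᵢⱼ)ₖ (Eᵢⱼ)ₗ` is `C_{kl}` by definition.
-/

noncomputable section

open scoped TensorProduct

/-- The tensor power `(ℂ^N)^{⊗n}`. -/
abbrev TP (n N : ℕ) := ⨂[ℂ] (_ : Fin n), (Fin N → ℂ)

/-- `P_σ`: the permutation of tensor factors,
`P_σ(x_1 ⊗ ⋯ ⊗ x_n) = x_{σ⁻¹(1)} ⊗ ⋯ ⊗ x_{σ⁻¹(n)}`. -/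
def permMap (n N : ℕ) (σ : Equiv.Perm (Fin n)) : TP n N →ₗ[ℂ] TP n N :=
  (PiTensorProduct.reindex ℂ (fun _ : Fin n => Fin N → ℂ) σ).toLinearMap

/-- The matrix `X` acting on the `k`-th tensor factor:
`Id^{⊗(k−1)} ⊗ X ⊗ Id^{⊗(n−k)}`. -/
def factorMap (n N : ℕ) (k : Fin n) (X : Matrix (Fin N) (Fin N) ℂ) :
    TP n N →ₗ[ℂ] TP n N :=
  PiTensorProduct.map (fun i => if i = k then Matrix.toLin' X else LinearMap.id)

/-- `D(X) = ∑_{k=1}^n Id^{⊗(k−1)} ⊗ X ⊗ Id^{⊗(n−k)}`. -/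
def Dmap (n N : ℕ) (X : Matrix (Fin N) (Fin N) ℂ) : TP n N →ₗ[ℂ] TP n N :=
  ∑ k : Fin n, factorMap n N k X

/-- The matrices `X` and `Y` acting on the `k`-th and `l`-th tensor factors respectively
(identity elsewhere); used below for `k ≠ l`. -/
def factor2Map (n N : ℕ) (k l : Fin n) (X Y : Matrix (Fin N) (Fin N) ℂ) :
    TP n N →ₗ[ℂ] TP n N :=
  PiTensorProduct.map
    (fun i => if i = k then Matrix.toLin' X else if i = l then Matrix.toLin' Y else LinearMap.id)

/-- The contraction-expansion operator `C_{kl} = ∑_{m,a} (E_{ma})_k ⊗ (E_{ma})_l`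
(`E_{ma}` the matrix units): on basis vectors it sends `e_{i_1} ⊗ ⋯ ⊗ e_{i_n}` to
`δ_{i_k i_l} ∑_{m=1}^N (the basis vector with the factors at positions k and l both
replaced by e_m)`. -/
def Cmap (n N : ℕ) (k l : Fin n) : TP n N →ₗ[ℂ] TP n N :=
  ∑ m : Fin N, ∑ a : Fin N,
    factor2Map n N k l (Matrix.single m a 1) (Matrix.single m a 1)

open Finset Matrix PiTensorProduct Function

theorem sum_prod_eq_sum_diag_add_sum_lt {ι M : Type*} [Fintype ι] [LinearOrder ι]
    [AddCommMonoid M] (f : ι × ι → M) :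
    ∑ p, f p = ∑ i, f (i, i) + ∑ p : ι × ι with p.1 < p.2, (f p + f p.swap) := by
  have hdiag : ∑ i, f (i, i) = ∑ p : ι × ι, if p.1 = p.2 then f p else 0 := by
    simp [Fintype.sum_prod_type]
  have hswap : ∑ p : ι × ι with p.1 < p.2, f p.swap = ∑ p : ι × ι with p.2 < p.1, f p :=
    Finset.sum_equiv (Equiv.prodComm ι ι) (by simp) (by simp)
  rw [sum_add_distrib, hswap, hdiag, sum_filter, sum_filter, ← sum_add_distrib,
    ← sum_add_distrib]
  refine sum_congr rfl fun p _ => ?_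
  rcases lt_trichotomy p.1 p.2 with h | h | h
  · simp [h, h.ne, h.not_gt]
  · simp [h]
  · simp [h, h.ne', h.not_gt]

theorem sum_isSwap_eq_sum_lt {ι M : Type*} [Fintype ι] [LinearOrder ι] [AddCommMonoid M]
    [DecidablePred (fun τ : Equiv.Perm ι => τ.IsSwap)] (f : Equiv.Perm ι → M) :
    ∑ p : ι × ι with p.1 < p.2, f (Equiv.swap p.1 p.2) = ∑ τ with τ.IsSwap, f τ := by
  refine sum_nbij (fun p => Equiv.swap p.1 p.2) ?_ ?_ ?_ fun _ _ => rfl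
  · intro p hp
    simp only [mem_filter, mem_univ, true_and] at hp ⊢
    exact ⟨p.1, p.2, hp.ne, rfl⟩
  · rintro ⟨a, b⟩ hab ⟨c, d⟩ hcd heq
    simp only [coe_filter, mem_univ, true_and, Set.mem_ofPred_eq] at hab hcd heq
    have hb : Equiv.swap c d a = b := by rw [← heq, Equiv.swap_apply_left]
    rw [Equiv.swap_apply_def] at hb
    split_ifs at hb with hac had
    · simp [hac, hb]
    · subst had hb; exact (lt_asymm hab hcd).elim
    · exact (hab.ne hb).elim
  · rintro τ hτ
    simp only [coe_filter, mem_univ, true_and, Set.mem_ofPred_eq] at hτ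
    obtain ⟨a, b, hab, rfl⟩ := hτ
    rcases hab.lt_or_gt with h | h
    · exact ⟨(a, b), by simpa using h, rfl⟩
    · exact ⟨(b, a), by simpa using h, Equiv.swap_comm b a⟩

section Completeness

variable {R ι n : Type*} [CommRing R] [Fintype ι] [DecidableEq n]

/-- The matrix form of `∑ₐ Yₐ ⊗ Yₐ = ½ ∑ᵢⱼ (Eᵢⱼ ⊗ Eᵢⱼ - Eᵢⱼ ⊗ Eⱼᵢ)`. -/
def IsSkewComplete (Y : ι → Matrix n n R) : Prop :=
  ∀ i j, (2 : R) • ∑ a, Y a i j • Y a = single i j 1 - single j i 1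

theorem IsSkewComplete.map {S : Type*} [CommRing S] (f : R →+* S) {Y : ι → Matrix n n R}
    (hY : IsSkewComplete Y) : IsSkewComplete fun a => (Y a).map f := fun i j => by
  ext p q
  simpa [Matrix.sum_apply, single_apply, apply_ite f, map_ofNat] using
    congr_arg f (congrFun₂ (hY i j) p q)

variable [Fintype n]

theorem coeff_eq_neg_trace_mul_of_orthonormal [DecidableEq ι] {Y : ι → Matrix n n R}
    (hortho : ∀ a b, -trace (Y a * Y b) = if a = b then 1 else 0) (c : ι → R) (b : ι) :
    -trace ((∑ a, c a • Y a) * Y b) = c b := by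
  simp only [Finset.sum_mul, trace_sum, smul_mul_assoc, trace_smul, ← Finset.sum_neg_distrib,
    smul_eq_mul, ← mul_neg, hortho]
  simp

theorem isSkewComplete_of_orthonormal [DecidableEq ι] {Y : ι → Matrix n n R}
    (hskew : ∀ a, (Y a)ᵀ = -Y a)
    (hortho : ∀ a b, -trace (Y a * Y b) = if a = b then 1 else 0)
    (hspan : ∀ Z : Matrix n n R, Zᵀ = -Z → ∃ c : ι → R, Z = ∑ a, c a • Y a) :
    IsSkewComplete Y := by
  intro i j
  set Z : Matrix n n R := single i j 1 - single j i 1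
  obtain ⟨c, hc⟩ := hspan Z (by simp [Z, transpose_single])
  have hcoeff : ∀ b, c b = 2 * Y b i j := fun b => by
    have hji : Y b j i = -Y b i j := by simpa using congrFun₂ (hskew b) i j
    rw [← coeff_eq_neg_trace_mul_of_orthonormal hortho c b, ← hc]
    simp [Z, sub_mul, trace_single_mul, hji]
    ring
  rw [hc, Finset.smul_sum]
  simp [hcoeff, smul_smul]

theorem IsSkewComplete.two_smul_sum_bilinear_add {M : Type*} [AddCommMonoid M] [Module R M]
    {Y : ι → Matrix n n R} (hY : IsSkewComplete Y)
    (B : Matrix n n R →ₗ[R] Matrix n n R →ₗ[R] M) :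
    (2 : R) • ∑ a, B (Y a) (Y a) + ∑ i, ∑ j, B (single i j 1) (single j i 1)
      = ∑ i, ∑ j, B (single i j 1) (single i j 1) := by
  have hexp : ∀ a, B (Y a) = ∑ i, ∑ j, Y a i j • B (single i j 1) := fun a => by
    conv_lhs => rw [matrix_eq_sum_single (Y a)]
    simp only [map_sum, ← map_smul, smul_single, smul_eq_mul, mul_one]
  have hsum : (2 : R) • ∑ a, B (Y a) (Y a)
      = ∑ i, ∑ j, B (single i j 1) (single i j 1 - single j i 1) := by
    simp only [← hY _ _, hexp, LinearMap.sum_apply, LinearMap.smul_apply, map_smul, map_sum,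
      Finset.smul_sum]
    rw [Finset.sum_comm]
    exact Finset.sum_congr rfl fun i _ => Finset.sum_comm
  rw [hsum, ← sum_add_distrib]
  exact sum_congr rfl fun i _ => by rw [← sum_add_distrib]; simp only [← map_add, sub_add_cancel]

theorem IsSkewComplete.two_smul_sum_mul_self {Y : ι → Matrix n n R} (hY : IsSkewComplete Y) :
    (2 : R) • ∑ a, Y a * Y a = (1 - Fintype.card n : R) • 1 := by
  have hsq : ∀ i j : n, single i j (1 : R) * single i j 1 = if j = i then single i i 1 else 0 :=
    fun i j => by
      split_ifs with h
      · subst h; simp [single_mul_single_same]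
      · exact single_mul_single_of_ne (h := h) ..
  have h := hY.two_smul_sum_bilinear_add (LinearMap.mul R _)
  simp only [LinearMap.mul_apply', single_mul_single_same, mul_one, hsq, Finset.sum_ite_eq',
    Finset.mem_univ, if_true, sum_single_one, sum_const, card_univ] at h
  rw [eq_sub_of_add_eq h]
  simp [sub_smul, ← sum_single_one, Finset.smul_sum]

end Completeness

section TensorPower

variable {n N : ℕ}

theorem factorMap_tprod (k : Fin n) (X : Matrix (Fin N) (Fin N) ℂ) (x : Fin n → Fin N → ℂ) :
    factorMap n N k X (tprod ℂ x) = tprod ℂ (update x k (X *ᵥ x k)) := by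
  rw [factorMap, map_tprod]
  congr 1
  funext i
  by_cases h : i = k
  · subst h; simp
  · simp [h]

def factorMapLin (n N : ℕ) (k : Fin n) :
    Matrix (Fin N) (Fin N) ℂ →ₗ[ℂ] Module.End ℂ (TP n N) :=
  ((mapMultilinear ℂ _ _).toLinearMap (fun _ => LinearMap.id) k).comp toLin'.toLinearMap

@[simp]
theorem factorMapLin_apply (k : Fin n) (X : Matrix (Fin N) (Fin N) ℂ) :
    factorMapLin n N k X = factorMap n N k X := by
  simp only [factorMapLin, factorMap, LinearMap.comp_apply, MultilinearMap.toLinearMap_apply,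
    mapMultilinear_apply]
  congr 1
  funext i
  simp [update_apply]

theorem factorMap_one (k : Fin n) : factorMap n N k 1 = 1 := by
  simp [factorMap, ← Module.End.one_eq_id]

theorem factorMap_mul (k : Fin n) (X X' : Matrix (Fin N) (Fin N) ℂ) :
    factorMap n N k X * factorMap n N k X' = factorMap n N k (X * X') := by
  rw [factorMap, factorMap, factorMap, ← PiTensorProduct.map_mul]
  congr 1
  funext i
  split_ifs <;> simp [Matrix.toLin'_mul, Module.End.mul_eq_comp]

theorem factorMap_mul_factorMap_of_ne {k l : Fin n} (hkl : k ≠ l)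
    (X X' : Matrix (Fin N) (Fin N) ℂ) :
    factorMap n N k X * factorMap n N l X' = factor2Map n N k l X X' := by
  rw [factorMap, factorMap, factor2Map, ← PiTensorProduct.map_mul]
  congr 1
  funext i
  by_cases hk : i = k
  · subst hk; simp [hkl, Module.End.mul_eq_comp]
  · by_cases hl : i = l <;> simp [hk, hl, Ne.symm hkl, Module.End.mul_eq_comp]

theorem commute_factorMap_of_ne {k l : Fin n} (hkl : k ≠ l) (X X' : Matrix (Fin N) (Fin N) ℂ) :
    Commute (factorMap n N k X) (factorMap n N l X') := by
  rw [Commute, SemiconjBy, factorMap, factorMap, ← PiTensorProduct.map_mul,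
    ← PiTensorProduct.map_mul]
  congr 1
  funext i
  by_cases hk : i = k
  · subst hk; simp [hkl, Module.End.mul_eq_comp]
  · by_cases hl : i = l <;> simp [hk, hl, Ne.symm hkl, Module.End.mul_eq_comp]

theorem tprod_update_update_eq_sum {k l : Fin n} (hkl : k ≠ l) (x : Fin n → Fin N → ℂ)
    (v w : Fin N → ℂ) :
    tprod ℂ (update (update x l v) k w) = ∑ i, ∑ j, (w i * v j) •
      tprod ℂ (update (update x l (Pi.single j 1)) k (Pi.single i 1)) := by
  conv_lhs => rw [pi_eq_sum_univ' w, MultilinearMap.map_update_sum]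
  refine Finset.sum_congr rfl fun i _ => ?_
  rw [MultilinearMap.map_update_smul, update_comm hkl.symm]
  conv_lhs => rw [pi_eq_sum_univ' v, MultilinearMap.map_update_sum, Finset.smul_sum]
  refine Finset.sum_congr rfl fun j _ => ?_
  rw [MultilinearMap.map_update_smul, smul_smul, update_comm hkl]

theorem tprod_update_update_smul {k l : Fin n} (hkl : k ≠ l) (x : Fin n → Fin N → ℂ)
    (a b : ℂ) (v w : Fin N → ℂ) :
    tprod ℂ (update (update x l (a • v)) k (b • w))
      = (b * a) • tprod ℂ (update (update x l v) k w) := by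
  rw [MultilinearMap.map_update_smul, update_comm hkl.symm, MultilinearMap.map_update_smul,
    update_comm hkl, smul_smul]

theorem single_one_mulVec (i j : Fin N) (v : Fin N → ℂ) :
    single i j 1 *ᵥ v = v j • Pi.single i 1 := by
  rw [single_mulVec, ← Pi.single_smul', smul_eq_mul, mul_one, one_mul]
  rfl

theorem factorMap_mul_factorMap_tprod {k l : Fin n} (hkl : k ≠ l)
    (X X' : Matrix (Fin N) (Fin N) ℂ) (x : Fin n → Fin N → ℂ) :
    (factorMap n N k X * factorMap n N l X') (tprod ℂ x)
      = tprod ℂ (update (update x l (X' *ᵥ x l)) k (X *ᵥ x k)) := by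
  rw [Module.End.mul_apply, factorMap_tprod, factorMap_tprod, update_of_ne hkl]

theorem permMap_swap_tprod (k l : Fin n) (x : Fin n → Fin N → ℂ) :
    permMap n N (Equiv.swap k l) (tprod ℂ x) = tprod ℂ (update (update x l (x k)) k (x l)) := by
  rw [permMap, LinearEquiv.coe_coe, reindex_tprod]
  congr 1
  funext i
  rw [Equiv.symm_swap]
  rcases eq_or_ne i k with rfl | hk
  · simp
  rcases eq_or_ne i l with rfl | hl
  · simp [hk]
  · simp [Equiv.swap_apply_of_ne_of_ne hk hl, hk, hl]

theorem permMap_swap_eq_sum {k l : Fin n} (hkl : k ≠ l) :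
    permMap n N (Equiv.swap k l)
      = ∑ i, ∑ j, factorMap n N k (single i j 1) * factorMap n N l (single j i 1) := by
  refine PiTensorProduct.ext (MultilinearMap.ext fun x => ?_)
  simp only [LinearMap.compMultilinearMap_apply, LinearMap.coe_sum, Finset.sum_apply,
    factorMap_mul_factorMap_tprod hkl, permMap_swap_tprod]
  rw [tprod_update_update_eq_sum hkl]
  simp only [single_one_mulVec, tprod_update_update_smul hkl]
  exact Finset.sum_congr rfl fun i _ => Finset.sum_congr rfl fun j _ => by rw [mul_comm]

theorem Cmap_eq_sum {k l : Fin n} (hkl : k ≠ l) :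
    Cmap n N k l = ∑ i, ∑ j, factorMap n N k (single i j 1) * factorMap n N l (single i j 1) := by
  simp only [Cmap, factorMap_mul_factorMap_of_ne hkl]

theorem IsSkewComplete.two_smul_sum_factorMap_mul_factorMap_add {ι : Type*} [Fintype ι]
    {Y : ι → Matrix (Fin N) (Fin N) ℂ} (hY : IsSkewComplete Y) {k l : Fin n} (hkl : k ≠ l) :
    (2 : ℂ) • ∑ a, factorMap n N k (Y a) * factorMap n N l (Y a) + permMap n N (Equiv.swap k l)
      = Cmap n N k l := by
  simpa [Cmap_eq_sum hkl, permMap_swap_eq_sum hkl] using hY.two_smul_sum_bilinear_add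
    ((LinearMap.mul ℂ (Module.End ℂ (TP n N))).compl₁₂ (factorMapLin n N k) (factorMapLin n N l))

theorem Dmap_sum {ι : Type*} (s : Finset ι) (X : ι → Matrix (Fin N) (Fin N) ℂ) :
    ∑ a ∈ s, Dmap n N (X a) = Dmap n N (∑ a ∈ s, X a) := by
  simp only [Dmap, ← factorMapLin_apply, map_sum]
  exact sum_comm

theorem Dmap_smul_one (c : ℂ) : Dmap n N (c • 1) = (n * c) • 1 := by
  have h : ∀ k, factorMap n N k (c • 1) = c • 1 := fun k => by
    rw [← factorMapLin_apply, map_smul, factorMapLin_apply, factorMap_one]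
  simp only [Dmap, h, sum_const, card_univ, Fintype.card_fin, ← Nat.cast_smul_eq_nsmul ℂ, smul_smul]

theorem Dmap_comp_self (X : Matrix (Fin N) (Fin N) ℂ) :
    Dmap n N X ∘ₗ Dmap n N X = Dmap n N (X * X) + ∑ p : Fin n × Fin n with p.1 < p.2,
      (2 : ℂ) • (factorMap n N p.1 X * factorMap n N p.2 X) := by
  rw [← Module.End.mul_eq_comp, Dmap, sum_mul_sum, ← Fintype.sum_prod_type',
    sum_prod_eq_sum_diag_add_sum_lt]
  congr 1
  · simp only [Dmap, factorMap_mul]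
  · refine sum_congr rfl fun p hp => ?_
    rw [Prod.fst_swap, Prod.snd_swap, ← (commute_factorMap_of_ne (mem_filter.1 hp).2.ne X X).eq,
      two_smul]

theorem IsSkewComplete.sum_permMap_add_sum_Dmap_comp_self {ι : Type*} [Fintype ι]
    [DecidablePred (fun τ : Equiv.Perm (Fin n) => τ.IsSwap)]
    {Y : ι → Matrix (Fin N) (Fin N) ℂ} (hY : IsSkewComplete Y) :
    (∑ τ with τ.IsSwap, permMap n N τ) + ∑ a, Dmap n N (Y a) ∘ₗ Dmap n N (Y a)
      = (-(((N : ℂ) - 1) * (n : ℂ) / 2)) • LinearMap.id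
          + ∑ p : Fin n × Fin n with p.1 < p.2, Cmap n N p.1 p.2 := by
  have hsq : ∑ a, Y a * Y a = (-((N : ℂ) - 1) / 2) • 1 := by
    have h := hY.two_smul_sum_mul_self
    rw [Fintype.card_fin] at h
    calc ∑ a, Y a * Y a = (2 : ℂ)⁻¹ • (2 : ℂ) • ∑ a, Y a * Y a := by
          rw [smul_smul]; norm_num
      _ = _ := by rw [h, smul_smul]; congr 1; ring
  have hcross : ∀ p ∈ univ.filter (fun p : Fin n × Fin n => p.1 < p.2),
      ∑ a, (2 : ℂ) • (factorMap n N p.1 (Y a) * factorMap n N p.2 (Y a))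
        + permMap n N (Equiv.swap p.1 p.2) = Cmap n N p.1 p.2 := fun p hp => by
    rw [← smul_sum]
    exact hY.two_smul_sum_factorMap_mul_factorMap_add (mem_filter.1 hp).2.ne
  rw [← sum_isSwap_eq_sum_lt]
  simp only [Dmap_comp_self, sum_add_distrib, Dmap_sum, hsq, Dmap_smul_one]
  rw [sum_comm, ← sum_congr rfl hcross, sum_add_distrib, Module.End.one_eq_id,
    show (n : ℂ) * (-((N : ℂ) - 1) / 2) = -(((N : ℂ) - 1) * n / 2) by ring]
  abel

end TensorPower

open scoped Classical in
theorem casimir_orthogonal_general (n N : ℕ)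
    (Y : Fin (N * (N - 1) / 2) → Matrix (Fin N) (Fin N) ℝ)
    (hskew : ∀ a, (Y a).transpose = -(Y a))
    (hortho : ∀ a b, -Matrix.trace (Y a * Y b) = if a = b then (1 : ℝ) else 0)
    (hspan : ∀ Z : Matrix (Fin N) (Fin N) ℝ, Z.transpose = -Z →
      ∃ c : Fin (N * (N - 1) / 2) → ℝ, Z = ∑ a, c a • Y a) :
    (∑ τ ∈ Finset.univ.filter (fun τ : Equiv.Perm (Fin n) => τ.IsSwap), permMap n N τ)
        + ∑ a, Dmap n N ((Y a).map Complex.ofReal) ∘ₗ Dmap n N ((Y a).map Complex.ofReal)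
      = (-(((N : ℂ) - 1) * (n : ℂ) / 2)) • LinearMap.id
          + ∑ p ∈ Finset.univ.filter (fun p : Fin n × Fin n => p.1 < p.2),
              Cmap n N p.1 p.2 := by
  exact ((isSkewComplete_of_orthonormal hskew hortho hspan).map Complex.ofRealHom
    ).sum_permMap_add_sum_Dmap_comp_self

open scoped Classical in
/-- For any ℝ-basis `(Y_1, …, Y_{N(N−1)/2})` of `so(N)` (antisymmetric real
matrices) orthonormal for `⟨X,Y⟩ = −Tr(XY)`, on `(ℂ^N)^{⊗n}` one has
`(∑_{τ ∈ T_n} P_τ) + ∑_a D(Y_a) ∘ D(Y_a) = −((N−1)n/2) · Id + ∑_{1 ≤ k < l ≤ n} C_{kl}`. -/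
theorem casimir_orthogonal (n N : ℕ) (hn : 1 ≤ n) (hN : 1 ≤ N)
    (Y : Fin (N * (N - 1) / 2) → Matrix (Fin N) (Fin N) ℝ)
    (hskew : ∀ a, (Y a).transpose = -(Y a))
    (hortho : ∀ a b, -Matrix.trace (Y a * Y b) = if a = b then (1 : ℝ) else 0)
    (hspan : ∀ Z : Matrix (Fin N) (Fin N) ℝ, Z.transpose = -Z →
      ∃ c : Fin (N * (N - 1) / 2) → ℝ, Z = ∑ a, c a • Y a) :
    (∑ τ ∈ Finset.univ.filter (fun τ : Equiv.Perm (Fin n) => τ.IsSwap), permMap n N τ)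
        + ∑ a, Dmap n N ((Y a).map Complex.ofReal) ∘ₗ Dmap n N ((Y a).map Complex.ofReal)
      = (-(((N : ℂ) - 1) * (n : ℂ) / 2)) • LinearMap.id
          + ∑ p ∈ Finset.univ.filter (fun p : Fin n × Fin n => p.1 < p.2),
              Cmap n N p.1 p.2 :=
  casimir_orthogonal_general n N Y hskew hortho hspan
end
end

section
/- Let n ≥ 1 and let σ ∈ S_n have cycle decomposition σ = c_1 c_2 ⋯ c_{ℓ(σ)} into cycles with pairwise disjoint supports (fixed points included as cycles of length 1, each c_j regarded as an element of S_n). Then for every integer k ≥ 0: S(σ, k, 0) = ∑ over tuples (l_1, …, l_{ℓ(σ)}) of non-negative integers with l_1 + ⋯ + l_{ℓ(σ)} = k of (k! / (l_1! ⋯ l_{ℓ(σ)}!)) · S(c_1, l_1, 0) ⋯ S(c_{ℓ(σ)}, l_{ℓ(σ)}, 0). -/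
noncomputable section

/-- Number of cycles of a permutation of `{0,…,n-1}`, counting fixed points as cycles. -/
def cycCount {n : ℕ} (σ : Equiv.Perm (Fin n)) : ℕ :=
  (n - σ.cycleType.sum) + σ.cycleType.card

/-- `IsPath k f` : `(f 0, f 1, …, f k)` is a path of length `k` in the Cayley graph of
the symmetric group generated by all transpositions. -/
def IsPath {n : ℕ} (k : ℕ) (f : ℕ → Equiv.Perm (Fin n)) : Prop :=
  ∀ i < k, ((f i)⁻¹ * f (i + 1)).IsSwap

/-- The defect of the path `(f 0, …, f k)`: the number of steps along which the number of
cycles decreases by one. -/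
def defect {n : ℕ} (k : ℕ) (f : ℕ → Equiv.Perm (Fin n)) : ℕ :=
  Nat.card {i : Fin k // cycCount (f (i + 1)) + 1 = cycCount (f i)}

/-- `S n σ k d`: the number of paths of length `k` starting at `σ` in the Cayley graph of
`S_n` (generated by transpositions) having defect `d`.  A path starting at `σ` is encoded
by its sequence of steps `τ : Fin k → Perm (Fin n)` (each a transposition), the vertices
visited being `σ * τ_1 * ⋯ * τ_i`. -/
def S (n : ℕ) (σ : Equiv.Perm (Fin n)) (k d : ℕ) : ℕ :=
  Nat.card {τ : Fin k → Equiv.Perm (Fin n) //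
    (∀ i, (τ i).IsSwap) ∧
    defect k (fun i => σ * ((List.ofFn τ).take i).prod) = d}

/-- `#Π_k(σ → σ')`: the number of paths of length `k` from `σ` to `σ'` in the Cayley graph. -/
def pathCount (n : ℕ) (σ σ' : Equiv.Perm (Fin n)) (k : ℕ) : ℕ :=
  Nat.card {τ : Fin k → Equiv.Perm (Fin n) //
    (∀ i, (τ i).IsSwap) ∧ σ * (List.ofFn τ).prod = σ'}

/-!
Multiplying `π` by a transposition `(a b)` splits a cycle when `a` and `b` lie in one cycle of `π`
and merges two cycles otherwise: the cycles avoiding `a` and `b` are unchanged, at most two cycles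
meet `{a, b}`, and the number of cycles changes parity because the sign does. So a path of defect
`0` is a sequence of transpositions, each swapping two points of one cycle of the current
permutation. If `σ = f * g` with `f`, `g` disjoint, every such step acts inside the support of `f`
or of `g` and keeps the factors disjoint, so defect-`0` paths from `σ` are the shuffles of
defect-`0` paths from `f` and from `g`: their counts form a binomial convolution, i.e. their
exponential generating functions multiply. Induction on the number of factors gives the
multinomial formula.
-/

open Equiv Finset

theorem Finset.Nat.sum_antidiagonalTuple_succ {M : Type*} [AddCommMonoid M] {m : ℕ} (k : ℕ)
    (f : (Fin (m + 1) → ℕ) → M) :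
    ∑ l ∈ Nat.antidiagonalTuple (m + 1) k, f l =
      ∑ p ∈ antidiagonal k, ∑ l ∈ Nat.antidiagonalTuple m p.2, f (Fin.cons p.1 l) := by
  -- both finsets are the lists `List.Nat.antidiagonalTuple`, `List.Nat.antidiagonal` in disguise
  change ((List.Nat.antidiagonalTuple (m + 1) k).map f).sum =
    ((List.Nat.antidiagonal k).map fun p =>
      ((List.Nat.antidiagonalTuple m p.2).map fun l => f (Fin.cons p.1 l)).sum).sum
  rw [List.Nat.antidiagonalTuple, List.map_flatMap, List.flatMap, List.sum_flatten, List.map_map]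
  simp only [Function.comp_def, List.map_map]

theorem List.prod_take_ofFn_succ {M : Type*} [Monoid M] {k : ℕ} (τ : Fin k → M) (i : Fin k) :
    ((List.ofFn τ).take (i + 1)).prod = ((List.ofFn τ).take i).prod * τ i := by
  rw [List.prod_take_succ _ _ (by simp), List.getElem_ofFn]

namespace Equiv.Perm

variable {α : Type*} {f g π σ τ : Perm α} {a b x y : α}

theorem sameCycle_mul_iff_of_commute_of_apply_eq_self (hc : Commute f g) (hx : g x = x) :
    (f * g).SameCycle x y ↔ f.SameCycle x y := by
  simp only [SameCycle, hc.mul_zpow, coe_mul, Function.comp_apply,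
    zpow_apply_eq_self_of_apply_eq_self hx]

theorem Disjoint.sameCycle_mul_iff (h : f.Disjoint g) :
    (f * g).SameCycle x y ↔ f.SameCycle x y ∨ g.SameCycle x y := by
  rcases h x with hf | hg
  · rw [h.commute.eq, sameCycle_mul_iff_of_commute_of_apply_eq_self h.commute.symm hf,
      or_iff_right_of_imp fun hxy => (hxy.eq_of_left hf) ▸ SameCycle.rfl]
  · rw [sameCycle_mul_iff_of_commute_of_apply_eq_self h.commute hg,
      or_iff_left_of_imp fun hxy => (hxy.eq_of_left hg) ▸ SameCycle.rfl]

variable [DecidableEq α]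

theorem pow_mul_swap_apply_of_not_sameCycle (ha : ¬π.SameCycle x a) (hb : ¬π.SameCycle x b)
    (i : ℕ) : ((π * swap a b) ^ i) x = (π ^ i) x := by
  induction i with
  | zero => rfl
  | succ i ih =>
    have hia : (π ^ i) x ≠ a := fun h => ha (h ▸ sameCycle_pow_right.2 SameCycle.rfl)
    have hib : (π ^ i) x ≠ b := fun h => hb (h ▸ sameCycle_pow_right.2 SameCycle.rfl)
    rw [pow_succ', mul_apply, ih, mul_apply, swap_apply_of_ne_of_ne hia hib, ← mul_apply,
      ← pow_succ']

variable [Fintype α]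

theorem sameCycle_mul_swap_iff_of_not_sameCycle (ha : ¬π.SameCycle x a)
    (hb : ¬π.SameCycle x b) : (π * swap a b).SameCycle x y ↔ π.SameCycle x y := by
  have key := pow_mul_swap_apply_of_not_sameCycle ha hb
  constructor <;> intro h <;> obtain ⟨i, rfl⟩ := h.exists_nat_pow_eq <;>
    exact key i ▸ sameCycle_pow_right.2 SameCycle.rfl

def orbitFinset (π : Perm α) (x : α) : Finset α := univ.filter (π.SameCycle x)

def orbits (π : Perm α) : Finset (Finset α) := univ.image π.orbitFinset

@[simp]
theorem mem_orbitFinset : y ∈ π.orbitFinset x ↔ π.SameCycle x y := by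
  simp [orbitFinset]

theorem orbitFinset_eq_iff : π.orbitFinset x = π.orbitFinset y ↔ π.SameCycle x y := by
  refine ⟨fun h => mem_orbitFinset.1 (h ▸ mem_orbitFinset.2 (SameCycle.refl π y)),
    fun h => ?_⟩
  ext z
  simp only [mem_orbitFinset]
  exact ⟨h.symm.trans, h.trans⟩

theorem orbitFinset_mul_swap_of_not_sameCycle (ha : ¬π.SameCycle x a)
    (hb : ¬π.SameCycle x b) : (π * swap a b).orbitFinset x = π.orbitFinset x := by
  ext y
  simp only [mem_orbitFinset, sameCycle_mul_swap_iff_of_not_sameCycle ha hb]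

theorem orbitFinset_of_mem_support (hx : x ∈ π.support) :
    π.orbitFinset x = (π.cycleOf x).support := by
  ext y
  rw [mem_orbitFinset, mem_support_cycleOf_iff, and_iff_left hx]

theorem image_orbitFinset_support (π : Perm α) :
    π.support.image π.orbitFinset = π.cycleFactorsFinset.image support := by
  ext s
  simp only [mem_image]
  constructor
  · rintro ⟨x, hx, rfl⟩
    exact ⟨π.cycleOf x, cycleOf_mem_cycleFactorsFinset_iff.2 hx,
      (orbitFinset_of_mem_support hx).symm⟩
  · rintro ⟨c, hc, rfl⟩
    obtain ⟨x, hx⟩ := (mem_cycleFactorsFinset_iff.1 hc).1.nonempty_support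
    have hxπ := mem_cycleFactorsFinset_support_le hc hx
    exact ⟨x, hxπ, by rw [orbitFinset_of_mem_support hxπ, ← cycle_is_cycleOf hx hc]⟩

theorem card_orbits (π : Perm α) :
    #π.orbits = (Fintype.card α - π.cycleType.sum) + π.cycleType.card := by
  have hsplit :
      π.orbits = π.supportᶜ.image π.orbitFinset ∪ π.support.image π.orbitFinset := by
    rw [orbits, ← image_union, union_comm, union_compl]
  have hdisj :
      _root_.Disjoint (π.supportᶜ.image π.orbitFinset) (π.support.image π.orbitFinset) := by
    simp only [disjoint_left, mem_image, mem_compl, not_exists, not_and]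
    rintro _ ⟨x, hx, rfl⟩ y hy hxy
    exact hx ((orbitFinset_eq_iff.1 hxy).mem_support_iff.1 hy)
  have hfixed : Set.InjOn π.orbitFinset ↑(π.supportᶜ) := fun x hx y _ hxy =>
    (orbitFinset_eq_iff.1 hxy).eq_of_left (notMem_support.1 (mem_compl.1 (mem_coe.1 hx)))
  have hcycles : Set.InjOn support (π.cycleFactorsFinset : Set (Perm α)) := by
    intro c hc d hd hcd
    obtain ⟨x, hx⟩ := (mem_cycleFactorsFinset_iff.1 hc).1.nonempty_support
    rw [cycle_is_cycleOf hx hc, cycle_is_cycleOf (hcd ▸ hx) hd]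
  rw [hsplit, card_union_of_disjoint hdisj, image_orbitFinset_support, card_image_of_injOn hfixed,
    card_image_of_injOn hcycles, card_compl, sum_cycleType, cycleType_def, Multiset.card_map,
    card_val]

theorem neg_one_pow_card_orbits (π : Perm α) :
    (-1 : ℤˣ) ^ #π.orbits = (-1) ^ Fintype.card α * sign π := by
  obtain ⟨d, hd⟩ := Nat.exists_eq_add_of_le π.sum_cycleType_le
  rw [card_orbits, sign_of_cycleType, hd, Nat.add_sub_cancel_left, ← pow_add,
    show π.cycleType.sum + d + (π.cycleType.sum + π.cycleType.card) =
      2 * π.cycleType.sum + (d + π.cycleType.card) by ring,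
    pow_add _ (2 * _), pow_mul, neg_one_sq, one_pow, one_mul]

theorem card_orbits_mul_swap_ne (π : Perm α) (hab : a ≠ b) :
    #(π * swap a b).orbits ≠ #π.orbits := by
  intro h
  have hsign := neg_one_pow_card_orbits (π * swap a b)
  rw [h, neg_one_pow_card_orbits, sign_mul, sign_swap hab, mul_neg_one, mul_right_inj] at hsign
  exact units_ne_neg_self _ hsign

theorem filter_orbits_subset_mul_swap (π : Perm α) (a b : α) :
    π.orbits.filter (fun O => a ∉ O ∧ b ∉ O) ⊆
      (π * swap a b).orbits.filter (fun O => a ∉ O ∧ b ∉ O) := by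
  simp only [subset_iff, mem_filter, orbits, mem_image, mem_univ, true_and]
  rintro _ ⟨⟨x, rfl⟩, ha, hb⟩
  rw [mem_orbitFinset] at ha hb
  exact ⟨⟨x, orbitFinset_mul_swap_of_not_sameCycle ha hb⟩, by
    simpa only [mem_orbitFinset] using And.intro ha hb⟩

theorem filter_orbits_mul_swap (π : Perm α) (a b : α) :
    (π * swap a b).orbits.filter (fun O => a ∉ O ∧ b ∉ O) =
      π.orbits.filter (fun O => a ∉ O ∧ b ∉ O) := by
  refine (filter_orbits_subset_mul_swap _ a b).antisymm' ?_
  simpa only [mul_assoc, swap_mul_self, mul_one] using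
    filter_orbits_subset_mul_swap (π * swap a b) a b

theorem card_orbits_eq_card_filter_add (π : Perm α) (a b : α) :
    #π.orbits = #(π.orbits.filter (fun O => a ∉ O ∧ b ∉ O)) +
      if π.SameCycle a b then 1 else 2 := by
  have hmeet :
      π.orbits.filter (fun O => ¬(a ∉ O ∧ b ∉ O)) =
        {π.orbitFinset a, π.orbitFinset b} := by
    ext O
    simp only [mem_filter, orbits, mem_image, mem_univ, true_and, mem_insert, mem_singleton,
      not_and_or, not_not]
    constructor
    · rintro ⟨⟨x, rfl⟩, ha | hb⟩
      · exact Or.inl (orbitFinset_eq_iff.2 (mem_orbitFinset.1 ha))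
      · exact Or.inr (orbitFinset_eq_iff.2 (mem_orbitFinset.1 hb))
    · rintro (rfl | rfl)
      · exact ⟨⟨a, rfl⟩, Or.inl (mem_orbitFinset.2 SameCycle.rfl)⟩
      · exact ⟨⟨b, rfl⟩, Or.inr (mem_orbitFinset.2 SameCycle.rfl)⟩
  rw [← card_filter_add_card_filter_not (p := fun O => a ∉ O ∧ b ∉ O), hmeet]
  split_ifs with h
  · rw [orbitFinset_eq_iff.2 h, pair_eq_singleton, card_singleton]
  · rw [card_pair (mt orbitFinset_eq_iff.1 h)]

theorem card_orbits_mul_swap_add_one_eq_iff (π : Perm α) (hab : a ≠ b) :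
    #(π * swap a b).orbits + 1 = #π.orbits ↔ ¬π.SameCycle a b := by
  -- both counts are `U + 1` or `U + 2` for the same `U`, and they differ
  have hπ := card_orbits_eq_card_filter_add π a b
  have hρ := card_orbits_eq_card_filter_add (π * swap a b) a b
  rw [filter_orbits_mul_swap] at hρ
  have hne := card_orbits_mul_swap_ne π hab
  split_ifs at hπ hρ with h h' h' <;>
    simp only [h, not_true_eq_false, not_false_eq_true, iff_true, iff_false] <;> omega

open scoped Classical in
def splittingSwaps (π : Perm α) : Finset (Perm α) :=
  univ.filter fun τ => τ.IsSwap ∧ ∀ x, π.SameCycle x (τ x)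

theorem mem_splittingSwaps :
    τ ∈ π.splittingSwaps ↔ τ.IsSwap ∧ ∀ x, π.SameCycle x (τ x) := by
  simp [splittingSwaps]

theorem swap_mem_splittingSwaps_iff (hab : a ≠ b) :
    swap a b ∈ π.splittingSwaps ↔ π.SameCycle a b := by
  rw [mem_splittingSwaps]
  refine ⟨fun h => by simpa using h.2 a, fun h => ⟨⟨a, b, hab, rfl⟩, fun x => ?_⟩⟩
  rw [swap_apply_def]
  split_ifs with hxa hxb
  · exact hxa ▸ h
  · exact hxb ▸ h.symm
  · exact SameCycle.rfl

theorem support_subset_of_mem_splittingSwaps (hτ : τ ∈ π.splittingSwaps) :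
    τ.support ⊆ π.support := by
  intro x hx
  rw [mem_support] at hx ⊢
  exact fun hπx => hx (((mem_splittingSwaps.1 hτ).2 x).eq_of_left hπx).symm

theorem splittingSwaps_one : (1 : Perm α).splittingSwaps = ∅ := by
  refine eq_empty_of_forall_notMem fun τ hτ => ?_
  obtain ⟨a, b, hab, rfl⟩ := (mem_splittingSwaps.1 hτ).1
  exact hab (sameCycle_one.1 ((swap_mem_splittingSwaps_iff hab).1 hτ))

theorem Disjoint.splittingSwaps_mul (h : f.Disjoint g) :
    (f * g).splittingSwaps = f.splittingSwaps ∪ g.splittingSwaps := by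
  ext τ
  rw [mem_union]
  by_cases hτ : τ.IsSwap
  · obtain ⟨a, b, hab, rfl⟩ := hτ
    simp only [swap_mem_splittingSwaps_iff hab, h.sameCycle_mul_iff]
  · simp only [mem_splittingSwaps, hτ, false_and, or_self]

theorem Disjoint.disjoint_splittingSwaps (h : f.Disjoint g) :
    _root_.Disjoint f.splittingSwaps g.splittingSwaps := by
  refine disjoint_left.2 fun τ hf hg => ?_
  obtain ⟨a, b, hab, rfl⟩ := (mem_splittingSwaps.1 hf).1
  have ha : a ∈ (swap a b).support := by simp [support_swap hab]
  exact disjoint_left.1 h.disjoint_support (support_subset_of_mem_splittingSwaps hf ha)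
    (support_subset_of_mem_splittingSwaps hg ha)

theorem Disjoint.disjoint_of_mem_splittingSwaps (h : f.Disjoint g)
    (hτ : τ ∈ f.splittingSwaps) : τ.Disjoint g :=
  h.mono (support_subset_of_mem_splittingSwaps hτ) le_rfl

def IsSplitPath (σ : Perm α) {k : ℕ} (τ : Fin k → Perm α) : Prop :=
  ∀ i : Fin k, τ i ∈ (σ * ((List.ofFn τ).take i).prod).splittingSwaps

def splitPathCount (σ : Perm α) (k : ℕ) : ℕ :=
  Nat.card {τ : Fin k → Perm α // σ.IsSplitPath τ}

theorem isSplitPath_cons {k : ℕ} (t : Perm α) (τ : Fin k → Perm α) :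
    σ.IsSplitPath (Fin.cons t τ) ↔ t ∈ σ.splittingSwaps ∧ (σ * t).IsSplitPath τ := by
  simp only [IsSplitPath, Fin.forall_fin_succ, Fin.cons_zero, Fin.cons_succ, List.ofFn_cons,
    Fin.val_zero, List.take_zero, List.prod_nil, mul_one, Fin.val_succ, List.take_succ_cons,
    List.prod_cons, mul_assoc]

theorem splitPathCount_zero (σ : Perm α) : σ.splitPathCount 0 = 1 := by
  have hall (τ : Fin 0 → Perm α) : σ.IsSplitPath τ := fun i => i.elim0
  rw [splitPathCount, Nat.card_congr (Equiv.subtypeUnivEquiv hall), Nat.card_unique]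

theorem splitPathCount_succ (σ : Perm α) (k : ℕ) :
    σ.splitPathCount (k + 1) = ∑ t ∈ σ.splittingSwaps, (σ * t).splitPathCount k := by
  have e := (Equiv.subtypeEquiv (Fin.consEquiv fun _ : Fin (k + 1) => Perm α)
    fun p => (isSplitPath_cons p.1 p.2).symm).symm.trans
      (Equiv.subtypeProdEquivSigmaSubtype
        fun t (τ : Fin k → Perm α) => t ∈ σ.splittingSwaps ∧ (σ * t).IsSplitPath τ)
  have hterm (t : Perm α) :
      Nat.card {τ : Fin k → Perm α // t ∈ σ.splittingSwaps ∧ (σ * t).IsSplitPath τ} =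
        if t ∈ σ.splittingSwaps then (σ * t).splitPathCount k else 0 := by
    split_ifs with ht
    · simp only [ht, true_and, splitPathCount]
    · simp only [ht, false_and, Nat.card_of_isEmpty]
  rw [splitPathCount, Nat.card_congr e, Nat.card_sigma]
  simp only [hterm, sum_ite_mem, univ_inter]

theorem splitPathCount_one (k : ℕ) : (1 : Perm α).splitPathCount k = if k = 0 then 1 else 0 := by
  cases k with
  | zero => exact splitPathCount_zero 1
  | succ k => rw [splitPathCount_succ, splittingSwaps_one, sum_empty, if_neg k.succ_ne_zero]

theorem Disjoint.splitPathCount_mul (h : f.Disjoint g) (k : ℕ) :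
    (f * g).splitPathCount k =
      ∑ p ∈ antidiagonal k, k.choose p.1 * f.splitPathCount p.1 * g.splitPathCount p.2 := by
  induction k generalizing f g with
  | zero => simp [splitPathCount_zero]
  | succ k ih =>
    have hf : ∑ τ ∈ f.splittingSwaps, (f * g * τ).splitPathCount k =
        ∑ p ∈ antidiagonal k,
          k.choose p.1 * f.splitPathCount (p.1 + 1) * g.splitPathCount p.2 := by
      have hτ (τ : Perm α) (hτ : τ ∈ f.splittingSwaps) : (f * g * τ).splitPathCount k =
          ∑ p ∈ antidiagonal k,
            k.choose p.1 * (f * τ).splitPathCount p.1 * g.splitPathCount p.2 := by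
        have hτg := h.disjoint_of_mem_splittingSwaps hτ
        rw [mul_assoc, hτg.commute.symm.eq, ← mul_assoc, ih (h.mul_left hτg)]
      simp only [sum_congr rfl hτ, splitPathCount_succ f, mul_sum, sum_mul]
      exact sum_comm
    have hg : ∑ τ ∈ g.splittingSwaps, (f * g * τ).splitPathCount k =
        ∑ p ∈ antidiagonal k,
          k.choose p.1 * f.splitPathCount p.1 * g.splitPathCount (p.2 + 1) := by
      have hτ (τ : Perm α) (hτ : τ ∈ g.splittingSwaps) : (f * g * τ).splitPathCount k =
          ∑ p ∈ antidiagonal k,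
            k.choose p.1 * f.splitPathCount p.1 * (g * τ).splitPathCount p.2 := by
        rw [mul_assoc, ih (h.symm.mul_left (h.symm.disjoint_of_mem_splittingSwaps hτ)).symm]
      simp only [sum_congr rfl hτ, splitPathCount_succ g, mul_sum]
      exact sum_comm
    have hpascal := sum_antidiagonal_choose_succ_mul
      (fun i j => f.splitPathCount i * g.splitPathCount j) k
    simp only [Nat.cast_id, ← mul_assoc] at hpascal
    rw [splitPathCount_succ, h.splittingSwaps_mul, sum_union h.disjoint_splittingSwaps, hf, hg,
      hpascal, add_comm]
    refine congrArg (_ + ·) (sum_congr rfl fun p hp => ?_)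
    rw [Nat.choose_symm_of_eq_add (mem_antidiagonal.1 hp).symm]

section

variable {K : Type*} [Field K] [CharZero K]

theorem Disjoint.splitPathCount_mul_div_factorial (h : f.Disjoint g) (k : ℕ) :
    ((f * g).splitPathCount k : K) / k.factorial =
      ∑ p ∈ antidiagonal k, (f.splitPathCount p.1 / p.1.factorial : K) *
        (g.splitPathCount p.2 / p.2.factorial) := by
  rw [h.splitPathCount_mul, Nat.cast_sum, sum_div]
  refine sum_congr rfl fun p hp => ?_
  obtain rfl := mem_antidiagonal.1 hp
  have hk : ((p.1 + p.2).factorial : K) ≠ 0 := Nat.cast_ne_zero.2 (Nat.factorial_ne_zero _)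
  rw [Nat.cast_mul, Nat.cast_mul, Nat.cast_add_choose]
  field_simp

theorem splitPathCount_prod_div_factorial {m : ℕ} (c : Fin m → Perm α)
    (hc : Pairwise fun i j => (c i).Disjoint (c j)) (k : ℕ) :
    ((List.ofFn c).prod.splitPathCount k : K) / k.factorial =
      ∑ l ∈ Nat.antidiagonalTuple m k,
        ∏ j, ((c j).splitPathCount (l j) : K) / (l j).factorial := by
  induction m generalizing k with
  | zero => cases k <;> simp [splitPathCount_one]
  | succ m ih =>
    have hdisj : (c 0).Disjoint (List.ofFn fun j : Fin m => c j.succ).prod :=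
      disjoint_prod_right _ fun g hg => by
        obtain ⟨j, rfl⟩ := List.mem_ofFn.1 hg
        exact hc (Fin.succ_ne_zero j).symm
    rw [List.ofFn_succ, List.prod_cons, hdisj.splitPathCount_mul_div_factorial,
      Nat.sum_antidiagonalTuple_succ]
    refine sum_congr rfl fun p _ => ?_
    rw [ih _ (fun i j hij => hc ((Fin.succ_injective m).ne hij)), mul_sum]
    simp only [Fin.prod_univ_succ, Fin.cons_zero, Fin.cons_succ]

end

end Equiv.Perm

open Equiv.Perm

theorem cycCount_eq_card_orbits {n : ℕ} (σ : Perm (Fin n)) : cycCount σ = #σ.orbits := by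
  rw [card_orbits, Fintype.card_fin]
  rfl

theorem mem_splittingSwaps_iff_cycCount {n : ℕ} {σ τ : Perm (Fin n)} :
    τ ∈ σ.splittingSwaps ↔ τ.IsSwap ∧ ¬cycCount (σ * τ) + 1 = cycCount σ := by
  by_cases hτ : τ.IsSwap
  · obtain ⟨a, b, hab, rfl⟩ := hτ
    rw [swap_mem_splittingSwaps_iff hab, cycCount_eq_card_orbits, cycCount_eq_card_orbits,
      card_orbits_mul_swap_add_one_eq_iff σ hab, not_not, and_iff_right ⟨a, b, hab, rfl⟩]
  · simp only [mem_splittingSwaps, hτ, false_and]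

theorem defect_eq_zero_iff {n k : ℕ} {f : ℕ → Perm (Fin n)} :
    defect k f = 0 ↔ ∀ i : Fin k, ¬cycCount (f (i + 1)) + 1 = cycCount (f i) := by
  rw [defect, Finite.card_eq_zero_iff, isEmpty_subtype]

theorem S_zero_eq_splitPathCount (n : ℕ) (σ : Perm (Fin n)) (k : ℕ) :
    S n σ k 0 = σ.splitPathCount k := by
  refine Nat.card_congr (Equiv.subtypeEquivRight fun τ => ?_)
  rw [defect_eq_zero_iff, ← forall_and]
  refine forall_congr' fun i => ?_
  rw [List.prod_take_ofFn_succ, ← mul_assoc, mem_splittingSwaps_iff_cycCount]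

theorem S_factorization_general (n m : ℕ) (σ : Equiv.Perm (Fin n))
    (c : Fin m → Equiv.Perm (Fin n))
    (hdisj : ∀ j j', j ≠ j' → Disjoint (c j).support (c j').support)
    (hprod : (List.ofFn c).prod = σ)
    (k : ℕ) :
    (S n σ k 0 : ℚ) =
      ∑ l ∈ Finset.Nat.antidiagonalTuple m k,
        ((k.factorial : ℚ) / ∏ j, ((l j).factorial : ℚ)) *
          ∏ j, (S n (c j) (l j) 0 : ℚ) := by
  have hk : (k.factorial : ℚ) ≠ 0 := Nat.cast_ne_zero.2 (Nat.factorial_ne_zero k)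
  have h := splitPathCount_prod_div_factorial (K := ℚ) c
    (fun i j hij => disjoint_iff_disjoint_support.2 (hdisj i j hij)) k
  rw [div_eq_iff hk, hprod] at h
  simp only [S_zero_eq_splitPathCount, h, sum_mul]
  refine sum_congr rfl fun l _ => ?_
  rw [prod_div_distrib]
  ring

/-- If `σ = c_1 ⋯ c_m` is the decomposition of `σ` into cycles with pairwise
disjoint supports (`m = ℓ(σ)`, fixed points included as trivial factors), then for every `k`,
`S(σ, k, 0) = ∑_{l_1+⋯+l_m=k} (k!/(l_1!⋯l_m!)) · S(c_1,l_1,0) ⋯ S(c_m,l_m,0)`. -/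
theorem S_factorization (n m : ℕ) (hn : 1 ≤ n) (σ : Equiv.Perm (Fin n))
    (c : Fin m → Equiv.Perm (Fin n))
    (hm : m = cycCount σ)
    (hcyc : ∀ j, (c j).IsCycle ∨ c j = 1)
    (hdisj : ∀ j j', j ≠ j' → Disjoint (c j).support (c j').support)
    (hprod : (List.ofFn c).prod = σ)
    (k : ℕ) :
    (S n σ k 0 : ℚ) =
      ∑ l ∈ Finset.Nat.antidiagonalTuple m k,
        ((k.factorial : ℚ) / ∏ j, ((l j).factorial : ℚ)) *
          ∏ j, (S n (c j) (l j) 0 : ℚ) :=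
  S_factorization_general n m σ c hdisj hprod k
end
end
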